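/- arXiv:2205.03354 — 4 statements merged into one kernel-verified Lean document; each statement's English description precedes it below -/
import Mathlib

section
/- Composition preserves the minimum order of accuracy: suppose stencil A (weights a_i, integer offsets u_i) approximates the p_a-th derivative with order of accuracy q_a, i.e., its Taylor moments satisfy T_A(α) = 0 for α < p_a, T_A(p_a) = 1, and T_A(α) = 0 for p_a < α < p_a + q_a; and similarly stencil B approximates the p_b-th derivative with order of accuracy q_b. Then the composed stencil C, with weights a_i·b_j and offsets u_i + v_j, satisfies T_C(α) = 0 for α < p_a + p_b, T_C(p_a + p_b) = 1, and T_C(α) = 0 for p_a + p_b < α < p_a + p_b + min(q_a, q_b). -/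
/-- The `α`-th Taylor moment of a one-dimensional finite difference stencil
with weights `c` and integer offsets `u`. -/
noncomputable def moment {ι : Type} [Fintype ι] (c : ι → ℝ) (u : ι → ℤ) (α : ℕ) : ℝ :=
  ∑ i, c i * ((u i : ℝ)) ^ α / (α.factorial : ℝ)

lemma moment_comp {ι κ : Type} [Fintype ι] [Fintype κ]
    (a : ι → ℝ) (u : ι → ℤ) (b : κ → ℝ) (v : κ → ℤ) (α : ℕ) :
    moment (fun p : ι × κ => a p.1 * b p.2) (fun p => u p.1 + v p.2) α =
    ∑ k ∈ Finset.range (α + 1), moment a u k * moment b v (α - k) := by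
  unfold moment
  rw [Fintype.sum_prod_type]
  have key : ∀ i j, a i * b j * ((u i + v j : ℤ) : ℝ) ^ α / (α.factorial : ℝ) =
      ∑ k ∈ Finset.range (α + 1),
        (a i * (u i : ℝ) ^ k / (k.factorial : ℝ)) *
        (b j * (v j : ℝ) ^ (α - k) / ((α - k).factorial : ℝ)) := by
    intro i j
    push_cast
    rw [add_pow, Finset.mul_sum, Finset.sum_div]
    apply Finset.sum_congr rfl; intro k hk
    have hk' : k ≤ α := Nat.lt_succ_iff.mp (Finset.mem_range.mp hk)
    have hfac : (α.choose k : ℝ) * (k.factorial * (α - k).factorial) = α.factorial := by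
      exact_mod_cast (mul_assoc _ _ _).symm.trans (Nat.choose_mul_factorial_mul_factorial hk')
    have h1 : (k.factorial : ℝ) ≠ 0 := Nat.cast_ne_zero.mpr k.factorial_ne_zero
    have h2 : ((α - k).factorial : ℝ) ≠ 0 := Nat.cast_ne_zero.mpr (α - k).factorial_ne_zero
    have h3 : (α.factorial : ℝ) ≠ 0 := Nat.cast_ne_zero.mpr α.factorial_ne_zero
    field_simp
    rw [← hfac]
    ring
  simp only [key]
  conv_lhs => enter [2, x]; rw [Finset.sum_comm]
  rw [Finset.sum_comm]
  apply Finset.sum_congr rfl; intro k _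
  exact (Finset.sum_mul_sum _ _ _ _).symm

/-- Composition preserves the minimum order of accuracy. -/
theorem composed_stencil_order_of_accuracy
    {ι κ : Type} [Fintype ι] [Fintype κ]
    (a : ι → ℝ) (u : ι → ℤ) (b : κ → ℝ) (v : κ → ℤ)
    (pa qa pb qb : ℕ)
    (hA0 : ∀ α < pa, moment a u α = 0)
    (hA1 : moment a u pa = 1)
    (hA2 : ∀ α, pa < α → α < pa + qa → moment a u α = 0)
    (hB0 : ∀ α < pb, moment b v α = 0)
    (hB1 : moment b v pb = 1)
    (hB2 : ∀ α, pb < α → α < pb + qb → moment b v α = 0) :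
    (∀ α < pa + pb,
      moment (fun p : ι × κ => a p.1 * b p.2) (fun p => u p.1 + v p.2) α = 0) ∧
    moment (fun p : ι × κ => a p.1 * b p.2) (fun p => u p.1 + v p.2) (pa + pb) = 1 ∧
    (∀ α, pa + pb < α → α < pa + pb + min qa qb →
      moment (fun p : ι × κ => a p.1 * b p.2) (fun p => u p.1 + v p.2) α = 0) := by
  refine ⟨?_, ?_, ?_⟩
  · intro α hα
    rw [moment_comp]
    apply Finset.sum_eq_zero
    intro k hk
    have hk' : k ≤ α := Nat.lt_succ_iff.mp (Finset.mem_range.mp hk)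
    by_cases h : k < pa
    · rw [hA0 k h, zero_mul]
    · have : α - k < pb := by omega
      rw [hB0 _ this, mul_zero]
  · rw [moment_comp]
    rw [Finset.sum_eq_single pa]
    · simp [hA1, hB1]
    · intro k hk hne
      have hk' : k ≤ pa + pb := Nat.lt_succ_iff.mp (Finset.mem_range.mp hk)
      by_cases h : k < pa
      · rw [hA0 k h, zero_mul]
      · have : pa + pb - k < pb := by omega
        rw [hB0 _ this, mul_zero]
    · intro h; exact absurd (Finset.mem_range.mpr (by omega)) h
  · intro α h1 h2
    rw [moment_comp]
    apply Finset.sum_eq_zero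
    intro k hk
    have hk' : k ≤ α := Nat.lt_succ_iff.mp (Finset.mem_range.mp hk)
    rcases lt_trichotomy k pa with h | h | h
    · rw [hA0 k h, zero_mul]
    · rw [h, hB2 (α - pa) (by omega) (by omega), mul_zero]
    · by_cases hb : α - k < pb
      · rw [hB0 _ hb, mul_zero]
      · have ha2 : k < pa + qa := by omega
        rw [hA2 k h ha2, zero_mul]
end

section
/- For every real θ, the trigonometric expression cos θ + 2·cos 2θ − cos 3θ − 2 lies in the interval [−128/27, 0]; that is, −128/27 ≤ cos θ + 2 cos 2θ − cos 3θ − 2 ≤ 0, and the lower bound is attained. -/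
/-- The trigonometric expression `cos θ + 2 cos 2θ − cos 3θ − 2` lies in
`[−128/27, 0]` for every real `θ`, and the lower bound is attained. -/
theorem trig_range_composed_fourth_derivative :
    (∀ θ : ℝ,
      -(128 / 27) ≤ Real.cos θ + 2 * Real.cos (2 * θ) - Real.cos (3 * θ) - 2 ∧
      Real.cos θ + 2 * Real.cos (2 * θ) - Real.cos (3 * θ) - 2 ≤ 0) ∧
    (∃ θ : ℝ,
      Real.cos θ + 2 * Real.cos (2 * θ) - Real.cos (3 * θ) - 2 = -(128 / 27)) := by
  constructor
  · intro θ
    have h2 : Real.cos (2 * θ) = 2 * Real.cos θ ^ 2 - 1 := Real.cos_two_mul θ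
    have h3 : Real.cos (3 * θ) = 4 * Real.cos θ ^ 3 - 3 * Real.cos θ := Real.cos_three_mul θ
    have hc1 : -1 ≤ Real.cos θ := Real.neg_one_le_cos θ
    have hc2 : Real.cos θ ≤ 1 := Real.cos_le_one θ
    constructor
    · nlinarith [sq_nonneg (Real.cos θ + 1/3), sq_nonneg (Real.cos θ - 1), sq_nonneg (Real.cos θ + 1)]
    · nlinarith [sq_nonneg (Real.cos θ - 1)]
  · refine ⟨Real.arccos (-(1/3)), ?_⟩
    have hc : Real.cos (Real.arccos (-(1/3))) = -(1/3) := by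
      apply Real.cos_arccos <;> norm_num
    rw [Real.cos_two_mul, Real.cos_three_mul, hc]
    norm_num
end

section
/- Von Neumann stability of the composed fourth-order scheme: for all real Δt > 0 and h > 0, the growth factor ξ_k = 1 + (Δt / (2h⁴))·(cos(hk) + 2·cos(2hk) − cos(3hk) − 2) satisfies |ξ_k| ≤ 1 for every real wave mode k if and only if Δt ≤ (27/32)·h⁴. -/
lemma symbol_eq (θ : ℝ) :
    Real.cos θ + 2 * Real.cos (2 * θ) - Real.cos (3 * θ) - 2 =
      -4 * (Real.cos θ - 1) ^ 2 * (Real.cos θ + 1) := by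
  rw [Real.cos_two_mul, Real.cos_three_mul]
  ring

/-- Von Neumann stability of the composed fourth-order scheme. -/
theorem vonNeumann_stability_composed_fourth_order
    (Δt h : ℝ) (hΔt : 0 < Δt) (hh : 0 < h) :
    (∀ k : ℝ,
      |1 + Δt / (2 * h ^ 4) *
        (Real.cos (h * k) + 2 * Real.cos (2 * h * k) - Real.cos (3 * h * k) - 2)| ≤ 1) ↔
      Δt ≤ 27 / 32 * h ^ 4 := by
  have hh4 : (0:ℝ) < h ^ 4 := by positivity
  constructor
  · intro H
    have hk := H (Real.arccos (-1/3) / h)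
    rw [mul_assoc 2 h, mul_assoc 3 h] at hk
    have harg : h * (Real.arccos (-1/3) / h) = Real.arccos (-1/3) := by
      field_simp
    rw [harg] at hk
    have hcos : Real.cos (Real.arccos (-1/3)) = -1/3 :=
      Real.cos_arccos (by norm_num) (by norm_num)
    have h2 : (2:ℝ) * Real.arccos (-1/3) = 2 * Real.arccos (-1/3) := rfl
    rw [symbol_eq, hcos] at hk
    rw [abs_le] at hk
    have hlow := hk.1
    have : 1 + Δt / (2 * h ^ 4) * (-4 * (-1/3 - 1) ^ 2 * (-1/3 + 1)) =
        1 - Δt / h ^ 4 * (64/27) := by ring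
    rw [this] at hlow
    have hd : Δt / h ^ 4 ≤ 27/32 := by linarith
    calc Δt = Δt / h ^ 4 * h ^ 4 := by field_simp
    _ ≤ 27/32 * h ^ 4 := by nlinarith
  · intro H k
    set c := Real.cos (h * k) with hc
    have hc1 : -1 ≤ c := Real.neg_one_le_cos _
    have hc2 : c ≤ 1 := Real.cos_le_one _
    rw [mul_assoc 2 h, mul_assoc 3 h, symbol_eq]
    have hg1 : -4 * (c - 1) ^ 2 * (c + 1) ≤ 0 := by nlinarith
    have hg2 : -(128/27) ≤ -4 * (c - 1) ^ 2 * (c + 1) := by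
      nlinarith [sq_nonneg (c + 1/3), sq_nonneg ((c + 1/3) * (c - 5/3))]
    have hA : 0 < Δt / (2 * h ^ 4) := by positivity
    have hA2 : Δt / (2 * h ^ 4) ≤ 27/64 := by
      rw [div_le_iff₀ (by positivity)]
      nlinarith
    rw [abs_le]
    constructor
    · nlinarith
    · nlinarith
end

section
/- Two-dimensional stencil composition for the mixed derivative: for f : ℝ × ℝ → ℝ infinitely differentiable and (x, y) ∈ ℝ², composing second-order central first-derivative stencils in the x- and y-directions gives a second-order accurate approximation of the mixed derivative ∂²f/∂x∂y with leading error coefficient 1/6 in each direction; precisely, as h → 0⁺ the quantity ( (f(x+h, y+h) − f(x+h, y−h) − f(x−h, y+h) + f(x−h, y−h))/(4h²) − ∂²f/∂x∂y (x, y) ) / h² converges to (1/6)·( ∂⁴f/∂x³∂y (x, y) + ∂⁴f/∂x∂y³ (x, y) ). -/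
open Filter Topology

/-- The partial derivative with respect to the first variable. -/
noncomputable def pdx (f : ℝ → ℝ → ℝ) : ℝ → ℝ → ℝ := fun x y => deriv (fun t => f t y) x

/-- The partial derivative with respect to the second variable. -/
noncomputable def pdy (f : ℝ → ℝ → ℝ) : ℝ → ℝ → ℝ := fun x y => deriv (fun t => f x t) y



noncomputable def Dx' (H : ℝ × ℝ → ℝ) : ℝ × ℝ → ℝ := fun p => fderiv ℝ H p (1, 0)
noncomputable def Dy' (H : ℝ × ℝ → ℝ) : ℝ × ℝ → ℝ := fun p => fderiv ℝ H p (0, 1)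

lemma contDiff_Dx' {H : ℝ × ℝ → ℝ} (hH : ContDiff ℝ (⊤ : ℕ∞) H) : ContDiff ℝ (⊤ : ℕ∞) (Dx' H) :=
  (hH.fderiv_right (by simp)).clm_apply contDiff_const

lemma contDiff_Dy' {H : ℝ × ℝ → ℝ} (hH : ContDiff ℝ (⊤ : ℕ∞) H) : ContDiff ℝ (⊤ : ℕ∞) (Dy' H) :=
  (hH.fderiv_right (by simp)).clm_apply contDiff_const

lemma clm_pair (L : ℝ × ℝ →L[ℝ] ℝ) (s t : ℝ) : L (s, t) = s * L (1, 0) + t * L (0, 1) := by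
  have h : (s, t) = s • ((1:ℝ), (0:ℝ)) + t • ((0:ℝ), (1:ℝ)) := by
    simp [Prod.ext_iff]
  rw [h, map_add, map_smul, map_smul, smul_eq_mul, smul_eq_mul]

lemma hasDerivAt_line {H : ℝ × ℝ → ℝ} (hH : ContDiff ℝ (⊤ : ℕ∞) H) (x y s t h : ℝ) :
    HasDerivAt (fun u => H (x + s * u, y + t * u))
      (s * Dx' H (x + s * h, y + t * h) + t * Dy' H (x + s * h, y + t * h)) h := by
  have hc : HasDerivAt (fun u : ℝ => (x + s * u, y + t * u)) ((s : ℝ), (t : ℝ)) h := by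
    have h1 : HasDerivAt (fun u : ℝ => x + s * u) s h := by
      simpa using ((hasDerivAt_id h).const_mul s).const_add x
    have h2 : HasDerivAt (fun u : ℝ => y + t * u) t h := by
      simpa using ((hasDerivAt_id h).const_mul t).const_add y
    exact h1.prodMk h2
  have hF := (hH.differentiable (by simp) (x + s * h, y + t * h)).hasFDerivAt
  have h2 := hF.comp_hasDerivAt h hc
  rw [clm_pair] at h2
  exact h2
noncomputable def St (i j : ℕ) (H : ℝ × ℝ → ℝ) (x y : ℝ) : ℝ → ℝ := fun h =>
  H (x + h, y + h) + (-1 : ℝ)^j * H (x + h, y - h) + (-1 : ℝ)^i * H (x - h, y + h)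
    + (-1 : ℝ)^(i+j) * H (x - h, y - h)

lemma St_hasDerivAt (i j : ℕ) {H : ℝ × ℝ → ℝ} (hH : ContDiff ℝ (⊤ : ℕ∞) H) (x y h : ℝ) :
    HasDerivAt (St i j H x y)
      (St (i+1) j (Dx' H) x y h + St i (j+1) (Dy' H) x y h) h := by
  have h1 := hasDerivAt_line hH x y 1 1 h
  have h2 := hasDerivAt_line hH x y 1 (-1) h
  have h3 := hasDerivAt_line hH x y (-1) 1 h
  have h4 := hasDerivAt_line hH x y (-1) (-1) h
  simp only [one_mul, neg_one_mul, ← sub_eq_add_neg] at h1 h2 h3 h4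
  have hs := ((h1.add (h2.const_mul ((-1:ℝ)^j))).add (h3.const_mul ((-1:ℝ)^i))).add
      (h4.const_mul ((-1:ℝ)^(i+j)))
  refine hs.congr_deriv ?_
  simp only [St, pow_succ, pow_add]; ring

lemma St_continuous (i j : ℕ) {H : ℝ × ℝ → ℝ} (hH : Continuous H) (x y : ℝ) :
    Continuous (St i j H x y) := by
  unfold St; fun_prop

lemma Dxy_comm {H : ℝ × ℝ → ℝ} (hH : ContDiff ℝ (⊤ : ℕ∞) H) : Dx' (Dy' H) = Dy' (Dx' H) := by
  funext p
  have hd : ∀ q, HasFDerivAt H (fderiv ℝ H q) q := fun q =>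
    (hH.differentiable (by simp) q).hasFDerivAt
  have hd2 : DifferentiableAt ℝ (fderiv ℝ H) p :=
    ((hH.fderiv_right (m := (⊤ : ℕ∞)) (by simp)).differentiable (by simp)) p
  have hsymm := second_derivative_symmetric hd hd2.hasFDerivAt ((1:ℝ),(0:ℝ)) ((0:ℝ),(1:ℝ))
  have e1 : Dx' (Dy' H) p = fderiv ℝ (fderiv ℝ H) p (1, 0) (0, 1) := by
    show fderiv ℝ (fun q => fderiv ℝ H q (0,1)) p (1,0) = _
    rw [fderiv_clm_apply hd2 (differentiableAt_const _)]
    simp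
  have e2 : Dy' (Dx' H) p = fderiv ℝ (fderiv ℝ H) p (0, 1) (1, 0) := by
    show fderiv ℝ (fun q => fderiv ℝ H q (1,0)) p (0,1) = _
    rw [fderiv_clm_apply hd2 (differentiableAt_const _)]
    simp
  rw [e1, e2, hsymm]

lemma pdx_eq {H : ℝ × ℝ → ℝ} (hH : ContDiff ℝ (⊤ : ℕ∞) H) (a b : ℝ) :
    deriv (fun t => H (t, b)) a = Dx' H (a, b) := by
  have hc : HasDerivAt (fun t : ℝ => (t, b)) ((1:ℝ), (0:ℝ)) a :=
    (hasDerivAt_id a).prodMk (hasDerivAt_const a b)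
  exact (((hH.differentiable (by simp) (a, b)).hasFDerivAt).comp_hasDerivAt a hc).deriv

lemma pdy_eq {H : ℝ × ℝ → ℝ} (hH : ContDiff ℝ (⊤ : ℕ∞) H) (a b : ℝ) :
    deriv (fun t => H (a, t)) b = Dy' H (a, b) := by
  have hc : HasDerivAt (fun t : ℝ => (a, t)) ((0:ℝ), (1:ℝ)) b :=
    (hasDerivAt_const b a).prodMk (hasDerivAt_id b)
  exact (((hH.differentiable (by simp) (a, b)).hasFDerivAt).comp_hasDerivAt b hc).deriv
noncomputable def NN0 (F : ℝ × ℝ → ℝ) (x y c : ℝ) : ℝ → ℝ := fun h =>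
  St 1 1 F x y h - 4 * c * h ^ 2
noncomputable def NN1 (F : ℝ × ℝ → ℝ) (x y c : ℝ) : ℝ → ℝ := fun h =>
  (St 2 1 (Dx' F) x y h + St 1 2 (Dy' F) x y h) - 8 * c * h
noncomputable def NN2 (F : ℝ × ℝ → ℝ) (x y c : ℝ) : ℝ → ℝ := fun h =>
  ((St 3 1 (Dx' (Dx' F)) x y h + St 2 2 (Dy' (Dx' F)) x y h)
    + (St 2 2 (Dx' (Dy' F)) x y h + St 1 3 (Dy' (Dy' F)) x y h)) - 8 * c
noncomputable def NN3 (F : ℝ × ℝ → ℝ) (x y : ℝ) : ℝ → ℝ := fun h =>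
  ((St 4 1 (Dx' (Dx' (Dx' F))) x y h + St 3 2 (Dy' (Dx' (Dx' F))) x y h)
    + (St 3 2 (Dx' (Dy' (Dx' F))) x y h + St 2 3 (Dy' (Dy' (Dx' F))) x y h))
  + ((St 3 2 (Dx' (Dx' (Dy' F))) x y h + St 2 3 (Dy' (Dx' (Dy' F))) x y h)
    + (St 2 3 (Dx' (Dy' (Dy' F))) x y h + St 1 4 (Dy' (Dy' (Dy' F))) x y h))
noncomputable def NN4 (F : ℝ × ℝ → ℝ) (x y : ℝ) : ℝ → ℝ := fun h =>
  (((St 5 1 (Dx' (Dx' (Dx' (Dx' F)))) x y h + St 4 2 (Dy' (Dx' (Dx' (Dx' F)))) x y h)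
    + (St 4 2 (Dx' (Dy' (Dx' (Dx' F)))) x y h + St 3 3 (Dy' (Dy' (Dx' (Dx' F)))) x y h))
  + ((St 4 2 (Dx' (Dx' (Dy' (Dx' F)))) x y h + St 3 3 (Dy' (Dx' (Dy' (Dx' F)))) x y h)
    + (St 3 3 (Dx' (Dy' (Dy' (Dx' F)))) x y h + St 2 4 (Dy' (Dy' (Dy' (Dx' F)))) x y h)))
  + (((St 4 2 (Dx' (Dx' (Dx' (Dy' F)))) x y h + St 3 3 (Dy' (Dx' (Dx' (Dy' F)))) x y h)
    + (St 3 3 (Dx' (Dy' (Dx' (Dy' F)))) x y h + St 2 4 (Dy' (Dy' (Dx' (Dy' F)))) x y h))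
  + ((St 3 3 (Dx' (Dx' (Dy' (Dy' F)))) x y h + St 2 4 (Dy' (Dx' (Dy' (Dy' F)))) x y h)
    + (St 2 4 (Dx' (Dy' (Dy' (Dy' F)))) x y h + St 1 5 (Dy' (Dy' (Dy' (Dy' F)))) x y h)))

lemma stencil_limit {F : ℝ × ℝ → ℝ} (hF : ContDiff ℝ (⊤ : ℕ∞) F) (x y : ℝ) :
    Tendsto (fun h : ℝ => (St 1 1 F x y h / (4 * h ^ 2) - Dx' (Dy' F) (x, y)) / h ^ 2)
      (𝓝[>] (0:ℝ))
      (𝓝 (1 / 6 * (Dx' (Dx' (Dx' (Dy' F))) (x, y) + Dx' (Dy' (Dy' (Dy' F))) (x, y)))) := by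
  set c := Dx' (Dy' F) (x, y) with hc
  have hF1x := contDiff_Dx' hF
  have hF1y := contDiff_Dy' hF
  have hFxx := contDiff_Dx' hF1x
  have hFyx := contDiff_Dy' hF1x
  have hFxy := contDiff_Dx' hF1y
  have hFyy := contDiff_Dy' hF1y
  -- derivative chains
  have hN0 : ∀ h : ℝ, HasDerivAt (NN0 F x y c) (NN1 F x y c h) h := by
    intro h
    have hp : HasDerivAt (fun u : ℝ => 4 * c * u ^ 2) (8 * c * h) h := by
      have := (hasDerivAt_pow 2 h).const_mul (4 * c)
      refine this.congr_deriv ?_ <;> norm_num <;> ring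
    exact (St_hasDerivAt 1 1 hF x y h).sub hp
  have hN1 : ∀ h : ℝ, HasDerivAt (NN1 F x y c) (NN2 F x y c h) h := by
    intro h
    have hp : HasDerivAt (fun u : ℝ => 8 * c * u) (8 * c) h := by
      simpa using (hasDerivAt_id h).const_mul (8 * c)
    exact ((St_hasDerivAt 2 1 hF1x x y h).add (St_hasDerivAt 1 2 hF1y x y h)).sub hp
  have hN2 : ∀ h : ℝ, HasDerivAt (NN2 F x y c) (NN3 F x y h) h := by
    intro h
    exact (((St_hasDerivAt 3 1 hFxx x y h).add (St_hasDerivAt 2 2 hFyx x y h)).add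
      ((St_hasDerivAt 2 2 hFxy x y h).add (St_hasDerivAt 1 3 hFyy x y h))).sub_const (8 * c)
  have hN3 : ∀ h : ℝ, HasDerivAt (NN3 F x y) (NN4 F x y h) h := by
    intro h
    exact (((St_hasDerivAt 4 1 (contDiff_Dx' hFxx) x y h).add
        (St_hasDerivAt 3 2 (contDiff_Dy' hFxx) x y h)).add
      ((St_hasDerivAt 3 2 (contDiff_Dx' hFyx) x y h).add
        (St_hasDerivAt 2 3 (contDiff_Dy' hFyx) x y h))).add
      (((St_hasDerivAt 3 2 (contDiff_Dx' hFxy) x y h).add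
        (St_hasDerivAt 2 3 (contDiff_Dy' hFxy) x y h)).add
      ((St_hasDerivAt 2 3 (contDiff_Dx' hFyy) x y h).add
        (St_hasDerivAt 1 4 (contDiff_Dy' hFyy) x y h)))
  -- denominators
  have hD0 : ∀ h : ℝ, HasDerivAt (fun u : ℝ => 4 * u ^ 4) (16 * h ^ 3) h := by
    intro h
    have := (hasDerivAt_pow 4 h).const_mul (4:ℝ)
    refine this.congr_deriv ?_ <;> norm_num <;> ring
  have hD1 : ∀ h : ℝ, HasDerivAt (fun u : ℝ => 16 * u ^ 3) (48 * h ^ 2) h := by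
    intro h
    have := (hasDerivAt_pow 3 h).const_mul (16:ℝ)
    refine this.congr_deriv ?_ <;> norm_num <;> ring
  have hD2 : ∀ h : ℝ, HasDerivAt (fun u : ℝ => 48 * u ^ 2) (96 * h) h := by
    intro h
    have := (hasDerivAt_pow 2 h).const_mul (48:ℝ)
    refine this.congr_deriv ?_ <;> norm_num <;> ring
  have hD3 : ∀ h : ℝ, HasDerivAt (fun u : ℝ => 96 * u) ((fun _ : ℝ => (96:ℝ)) h) h := by
    intro h
    simpa using (hasDerivAt_id h).const_mul (96:ℝ)
  -- continuity
  have dN0 : Differentiable ℝ (NN0 F x y c) := fun h => (hN0 h).differentiableAt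
  have dN1 : Differentiable ℝ (NN1 F x y c) := fun h => (hN1 h).differentiableAt
  have dN2 : Differentiable ℝ (NN2 F x y c) := fun h => (hN2 h).differentiableAt
  have dN3 : Differentiable ℝ (NN3 F x y) := fun h => (hN3 h).differentiableAt
  have cN0 : Continuous (NN0 F x y c) := dN0.continuous
  have cN1 : Continuous (NN1 F x y c) := dN1.continuous
  have cN2 : Continuous (NN2 F x y c) := dN2.continuous
  have cN3 : Continuous (NN3 F x y) := dN3.continuous
  have cN4 : Continuous (NN4 F x y) := by
    unfold NN4
    refine ((((St_continuous _ _ ?_ x y).add (St_continuous _ _ ?_ x y)).add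
      ((St_continuous _ _ ?_ x y).add (St_continuous _ _ ?_ x y))).add
      (((St_continuous _ _ ?_ x y).add (St_continuous _ _ ?_ x y)).add
      ((St_continuous _ _ ?_ x y).add (St_continuous _ _ ?_ x y)))).add
      ((((St_continuous _ _ ?_ x y).add (St_continuous _ _ ?_ x y)).add
      ((St_continuous _ _ ?_ x y).add (St_continuous _ _ ?_ x y))).add
      (((St_continuous _ _ ?_ x y).add (St_continuous _ _ ?_ x y)).add
      ((St_continuous _ _ ?_ x y).add (St_continuous _ _ ?_ x y)))) <;>
      first
        | exact (contDiff_Dx' (contDiff_Dx' (contDiff_Dx' (contDiff_Dx' hF)))).continuous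
        | exact (contDiff_Dy' (contDiff_Dx' (contDiff_Dx' (contDiff_Dx' hF)))).continuous
        | exact (contDiff_Dx' (contDiff_Dy' (contDiff_Dx' (contDiff_Dx' hF)))).continuous
        | exact (contDiff_Dy' (contDiff_Dy' (contDiff_Dx' (contDiff_Dx' hF)))).continuous
        | exact (contDiff_Dx' (contDiff_Dx' (contDiff_Dy' (contDiff_Dx' hF)))).continuous
        | exact (contDiff_Dy' (contDiff_Dx' (contDiff_Dy' (contDiff_Dx' hF)))).continuous
        | exact (contDiff_Dx' (contDiff_Dy' (contDiff_Dy' (contDiff_Dx' hF)))).continuous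
        | exact (contDiff_Dy' (contDiff_Dy' (contDiff_Dy' (contDiff_Dx' hF)))).continuous
        | exact (contDiff_Dx' (contDiff_Dx' (contDiff_Dx' (contDiff_Dy' hF)))).continuous
        | exact (contDiff_Dy' (contDiff_Dx' (contDiff_Dx' (contDiff_Dy' hF)))).continuous
        | exact (contDiff_Dx' (contDiff_Dy' (contDiff_Dx' (contDiff_Dy' hF)))).continuous
        | exact (contDiff_Dy' (contDiff_Dy' (contDiff_Dx' (contDiff_Dy' hF)))).continuous
        | exact (contDiff_Dx' (contDiff_Dx' (contDiff_Dy' (contDiff_Dy' hF)))).continuous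
        | exact (contDiff_Dy' (contDiff_Dx' (contDiff_Dy' (contDiff_Dy' hF)))).continuous
        | exact (contDiff_Dx' (contDiff_Dy' (contDiff_Dy' (contDiff_Dy' hF)))).continuous
        | exact (contDiff_Dy' (contDiff_Dy' (contDiff_Dy' (contDiff_Dy' hF)))).continuous
  -- values at zero
  have vN0 : NN0 F x y c 0 = 0 := by norm_num [NN0, St]
  have vN1 : NN1 F x y c 0 = 0 := by norm_num [NN1, St]
  have vN2 : NN2 F x y c 0 = 0 := by
    simp only [NN2, St, hc, ← Dxy_comm hF]
    norm_num
    ring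
  have vN3 : NN3 F x y 0 = 0 := by norm_num [NN3, St]
  have vN4 : NN4 F x y 0 / 96
      = 1 / 6 * (Dx' (Dx' (Dx' (Dy' F))) (x, y) + Dx' (Dy' (Dy' (Dy' F))) (x, y)) := by
    simp only [NN4, St]
    norm_num
    simp only [← Dxy_comm hF, ← Dxy_comm hF1x, ← Dxy_comm hF1y, ← Dxy_comm hFxx,
      ← Dxy_comm hFyy]
    ring
  -- tendsto-to-zero facts
  have tN0 : Tendsto (NN0 F x y c) (𝓝[>] 0) (𝓝 0) :=
    (cN0.tendsto' 0 0 vN0).mono_left nhdsWithin_le_nhds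
  have tN1 : Tendsto (NN1 F x y c) (𝓝[>] 0) (𝓝 0) :=
    (cN1.tendsto' 0 0 vN1).mono_left nhdsWithin_le_nhds
  have tN2 : Tendsto (NN2 F x y c) (𝓝[>] 0) (𝓝 0) :=
    (cN2.tendsto' 0 0 vN2).mono_left nhdsWithin_le_nhds
  have tN3 : Tendsto (NN3 F x y) (𝓝[>] 0) (𝓝 0) :=
    (cN3.tendsto' 0 0 vN3).mono_left nhdsWithin_le_nhds
  have tD0 : Tendsto (fun u : ℝ => 4 * u ^ 4) (𝓝[>] 0) (𝓝 0) := by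
    have : Continuous (fun u : ℝ => 4 * u ^ 4) := by fun_prop
    exact (this.tendsto' 0 0 (by norm_num)).mono_left nhdsWithin_le_nhds
  have tD1 : Tendsto (fun u : ℝ => 16 * u ^ 3) (𝓝[>] 0) (𝓝 0) := by
    have : Continuous (fun u : ℝ => 16 * u ^ 3) := by fun_prop
    exact (this.tendsto' 0 0 (by norm_num)).mono_left nhdsWithin_le_nhds
  have tD2 : Tendsto (fun u : ℝ => 48 * u ^ 2) (𝓝[>] 0) (𝓝 0) := by
    have : Continuous (fun u : ℝ => 48 * u ^ 2) := by fun_prop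
    exact (this.tendsto' 0 0 (by norm_num)).mono_left nhdsWithin_le_nhds
  have tD3 : Tendsto (fun u : ℝ => 96 * u) (𝓝[>] 0) (𝓝 0) := by
    have : Continuous (fun u : ℝ => 96 * u) := by fun_prop
    exact (this.tendsto' 0 0 (by norm_num)).mono_left nhdsWithin_le_nhds
  -- L'Hopital chain
  have L4 : Tendsto (fun h : ℝ => NN4 F x y h / (fun _ : ℝ => (96:ℝ)) h) (𝓝[>] 0)
      (𝓝 (1 / 6 * (Dx' (Dx' (Dx' (Dy' F))) (x, y) + Dx' (Dy' (Dy' (Dy' F))) (x, y)))) := by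
    rw [← vN4]
    exact ((cN4.div_const 96).tendsto' 0 _ rfl).mono_left nhdsWithin_le_nhds
  have L3 : Tendsto (fun h : ℝ => NN3 F x y h / (96 * h)) (𝓝[>] 0)
      (𝓝 (1 / 6 * (Dx' (Dx' (Dx' (Dy' F))) (x, y) + Dx' (Dy' (Dy' (Dy' F))) (x, y)))) :=
    HasDerivAt.lhopital_zero_nhdsGT (.of_forall hN3) (.of_forall hD3)
      (eventually_nhdsWithin_of_forall fun h (hh : 0 < h) => by norm_num) tN3 tD3 L4
  have L2 : Tendsto (fun h : ℝ => NN2 F x y c h / (48 * h ^ 2)) (𝓝[>] 0)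
      (𝓝 (1 / 6 * (Dx' (Dx' (Dx' (Dy' F))) (x, y) + Dx' (Dy' (Dy' (Dy' F))) (x, y)))) :=
    HasDerivAt.lhopital_zero_nhdsGT (.of_forall hN2) (.of_forall hD2)
      (eventually_nhdsWithin_of_forall fun h (hh : 0 < h) => by positivity) tN2 tD2 L3
  have L1 : Tendsto (fun h : ℝ => NN1 F x y c h / (16 * h ^ 3)) (𝓝[>] 0)
      (𝓝 (1 / 6 * (Dx' (Dx' (Dx' (Dy' F))) (x, y) + Dx' (Dy' (Dy' (Dy' F))) (x, y)))) :=
    HasDerivAt.lhopital_zero_nhdsGT (.of_forall hN1) (.of_forall hD1)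
      (eventually_nhdsWithin_of_forall fun h (hh : 0 < h) => by positivity) tN1 tD1 L2
  have L0 : Tendsto (fun h : ℝ => NN0 F x y c h / (4 * h ^ 4)) (𝓝[>] 0)
      (𝓝 (1 / 6 * (Dx' (Dx' (Dx' (Dy' F))) (x, y) + Dx' (Dy' (Dy' (Dy' F))) (x, y)))) :=
    HasDerivAt.lhopital_zero_nhdsGT (.of_forall hN0) (.of_forall hD0)
      (eventually_nhdsWithin_of_forall fun h (hh : 0 < h) => by positivity) tN0 tD0 L1
  refine L0.congr' ?_
  filter_upwards [self_mem_nhdsWithin] with h (hh : 0 < h)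
  have h0 : h ≠ 0 := ne_of_gt hh
  unfold NN0
  field_simp

lemma curry_pdx {H : ℝ × ℝ → ℝ} (hH : ContDiff ℝ (⊤ : ℕ∞) H) :
    pdx (fun a b => H (a, b)) = fun a b => Dx' H (a, b) :=
  funext fun a => funext fun b => pdx_eq hH a b

lemma curry_pdy {H : ℝ × ℝ → ℝ} (hH : ContDiff ℝ (⊤ : ℕ∞) H) :
    pdy (fun a b => H (a, b)) = fun a b => Dy' H (a, b) :=
  funext fun a => funext fun b => pdy_eq hH a b

/-- Two-dimensional stencil composition for the mixed derivative:
the composed cross stencil is a second-order accurate approximation of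
`∂²f/∂x∂y` with leading error coefficient `1/6` in each direction. -/
theorem composed_mixed_derivative_2d
    (f : ℝ → ℝ → ℝ) (hf : ContDiff ℝ (⊤ : ℕ∞) (fun p : ℝ × ℝ => f p.1 p.2)) (x y : ℝ) :
    Tendsto
      (fun h : ℝ =>
        ((f (x + h) (y + h) - f (x + h) (y - h) - f (x - h) (y + h)
            + f (x - h) (y - h)) / (4 * h ^ 2)
          - pdx (pdy f) x y) / h ^ 2)
      (𝓝[>] 0)
      (𝓝 (1 / 6 * (pdx (pdx (pdx (pdy f))) x y + pdx (pdy (pdy (pdy f))) x y))) := by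
  have h1 : pdy f = fun a b => Dy' (fun p : ℝ × ℝ => f p.1 p.2) (a, b) := curry_pdy hf
  have h2 : pdx (pdy f)
      = fun a b => Dx' (Dy' (fun p : ℝ × ℝ => f p.1 p.2)) (a, b) := by
    rw [h1]; exact curry_pdx (contDiff_Dy' hf)
  have h3 : pdx (pdx (pdx (pdy f)))
      = fun a b => Dx' (Dx' (Dx' (Dy' (fun p : ℝ × ℝ => f p.1 p.2)))) (a, b) := by
    rw [h2, curry_pdx (contDiff_Dx' (contDiff_Dy' hf)),
      curry_pdx (contDiff_Dx' (contDiff_Dx' (contDiff_Dy' hf)))]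
  have h4 : pdx (pdy (pdy (pdy f)))
      = fun a b => Dx' (Dy' (Dy' (Dy' (fun p : ℝ × ℝ => f p.1 p.2)))) (a, b) := by
    rw [h1, curry_pdy (contDiff_Dy' hf), curry_pdy (contDiff_Dy' (contDiff_Dy' hf)),
      curry_pdx (contDiff_Dy' (contDiff_Dy' (contDiff_Dy' hf)))]
  have goal_eq : (fun h : ℝ =>
        ((f (x + h) (y + h) - f (x + h) (y - h) - f (x - h) (y + h)
            + f (x - h) (y - h)) / (4 * h ^ 2)
          - pdx (pdy f) x y) / h ^ 2)
      = fun h : ℝ => (St 1 1 (fun p : ℝ × ℝ => f p.1 p.2) x y h / (4 * h ^ 2)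
          - Dx' (Dy' (fun p : ℝ × ℝ => f p.1 p.2)) (x, y)) / h ^ 2 := by
    funext h
    rw [h2]
    simp only [St]
    norm_num
    ring
  rw [goal_eq, h3, h4]
  exact stencil_limit hf x y
end
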